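/- arXiv:2305.02672 — 3 statements merged into one kernel-verified Lean document; each statement's English description precedes it below -/
import Mathlib

section
/- Let r ≥ 1 and let b_0, b_1, …, b_{r−1} ∈ {0,1}. There exists a natural number n whose canonical φ-representation has nonnegative-position digits exactly b_0, …, b_{r−1} — i.e., there exists n ∈ ℕ with d_j(n) = b_j for 0 ≤ j ≤ r−1 and d_j(n) = 0 for all j ≥ r — if and only if (a) b_j·b_{j+1} = 0 for all 0 ≤ j < r−1, and (b) there is no integer i ≥ 0 with 2i+1 ≤ r−1 such that b_0 = 1, b_{2i+1} = 1, and b_k = 0 for all 1 ≤ k ≤ 2i (i.e., the word b_{r−1} ⋯ b_0 has no suffix of the form 1(00)^i 1). -/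
/-- The golden ratio φ = (1+√5)/2. -/
noncomputable def phi : ℝ := (1 + Real.sqrt 5) / 2

/-- `a` is a finite φ-representation of the real number `x`: a finitely supported
function `a : ℤ → {0,1}` with `x = Σ_{i ∈ ℤ} a(i) · φ^i`. -/
def IsPhiRep (x : ℝ) (a : ℤ →₀ ℕ) : Prop :=
  (∀ i, a i ≤ 1) ∧ x = ∑ i ∈ a.support, (a i : ℝ) * phi ^ i

/-- `a` is the canonical φ-representation of `x`: a finite φ-representation with
no two adjacent digits equal to 1. -/
def IsCanonRep (x : ℝ) (a : ℤ →₀ ℕ) : Prop :=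
  IsPhiRep x a ∧ ∀ i : ℤ, a i * a (i + 1) = 0

/-!
Let `ψ = -φ⁻¹` be the conjugate of `φ`. For `t ≥ 0` the Lucas number `φ^t + ψ^t` is an integer, so
a sparse set `A` of exponents has integral value iff
`∑_{i ∈ A, i ≥ 0} ψ^i - ∑_{i ∈ A, i < 0} φ^i` is an integer. If the nonnegative digits end in
`1(00)^i1` with `i ≥ 1`, the first sum is `1 - φ^(-(2i+1))` up to less than `φ^(-(2i+2))`, and the
second lies in `[0, φ⁻¹)` because the digit `-1` is excluded; so the difference lies strictly
between `0` and `1`. For `i = 0` the suffix `11` is not sparse.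

Conversely, an admissible word is completed digit by digit from its lowest `1` upwards, each new
top digit `t` raising the value by the integer `φ^t + ψ^t`. When `t` is even, `ψ^t = φ^(-t)` is
the new digit `-t`; when `t` is odd, `ψ^t = -φ^(-t)` is paid for by rewriting the lowest digit of
the completion (`addOddDigit`), the digit `0` of the integer `1` if there is no earlier digit.
That lowest digit is always the even exponent `-(t' + t' % 2)`, where `t'` is the previous top
digit; it is the digit `0` of the word itself only when the word so far is `1`, and then the new
odd digit creates a forbidden suffix. Since a sparse set of exponents below `m` has value `< φ^m`,
distinct sparse sets have distinct values, so the completion is the canonical representation.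
-/

open Finset Real goldenRatio

theorem goldenRatio_zpow_add_two (i : ℤ) : φ ^ (i + 2) = φ ^ (i + 1) + φ ^ i := by
  rw [zpow_add₀ goldenRatio_ne_zero, zpow_add_one₀ goldenRatio_ne_zero, zpow_two]
  linear_combination φ ^ i * goldenRatio_sq

theorem goldenRatio_zpow_neg_eq_add (j : ℤ) : φ ^ (-j) = φ ^ (-(j + 1)) + φ ^ (-(j + 2)) := by
  have := goldenRatio_zpow_add_two (-(j + 2))
  rwa [show -(j + 2) + 2 = -j by ring, show -(j + 2) + 1 = -(j + 1) by ring] at this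

theorem abs_goldenConj_zpow (i : ℤ) : |ψ ^ i| = φ ^ (-i) := by
  rw [abs_zpow, ← inv_zpow', ← neg_neg ψ, ← inv_goldenRatio, abs_neg,
    abs_of_pos (inv_pos.2 goldenRatio_pos)]

theorem exists_int_goldenRatio_zpow_add_goldenConj_zpow (n : ℕ) :
    ∃ z : ℤ, φ ^ (n : ℤ) + ψ ^ (n : ℤ) = z :=
  ⟨2 * Nat.fib (n + 1) - Nat.fib n, by
    rw [zpow_natCast, zpow_natCast, ← fib_succ_sub_goldenConj_mul_fib,
      ← fib_succ_sub_goldenRatio_mul_fib]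
    push_cast
    linear_combination (-(Nat.fib n : ℝ)) * goldenRatio_add_goldenConj⟩

theorem Even.goldenConj_zpow {i : ℤ} (h : Even i) : ψ ^ i = φ ^ (-i) := by
  rw [← neg_neg ψ, ← inv_goldenRatio, h.neg_zpow, inv_zpow']

theorem Odd.goldenConj_zpow {i : ℤ} (h : Odd i) : ψ ^ i = -φ ^ (-i) := by
  rw [← neg_neg ψ, ← inv_goldenRatio, h.neg_zpow, inv_zpow']

def IsSparse (A : Finset ℤ) : Prop := ∀ i ∈ A, i + 1 ∉ A

theorem IsSparse.mono {A B : Finset ℤ} (hA : IsSparse A) (hBA : B ⊆ A) : IsSparse B :=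
  fun i hi hi1 => hA i (hBA hi) (hBA hi1)

noncomputable def goldenSum (A : Finset ℤ) : ℝ := ∑ i ∈ A, φ ^ i

theorem goldenSum_nonneg (A : Finset ℤ) : 0 ≤ goldenSum A :=
  sum_nonneg fun i _ => (zpow_pos goldenRatio_pos i).le

theorem zpow_le_goldenSum {A : Finset ℤ} {i : ℤ} (hi : i ∈ A) : φ ^ i ≤ goldenSum A :=
  single_le_sum (fun j _ => (zpow_pos goldenRatio_pos j).le) hi

theorem goldenSum_insert {A : Finset ℤ} {i : ℤ} (hi : i ∉ A) :
    goldenSum (insert i A) = φ ^ i + goldenSum A :=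
  sum_insert hi

theorem IsSparse.goldenSum_lt_zpow {A : Finset ℤ} (hA : IsSparse A) {m : ℤ}
    (hm : ∀ i ∈ A, i < m) : goldenSum A < φ ^ m := by
  induction A using Finset.induction_on_max generalizing m with
  | empty => simpa [goldenSum] using zpow_pos goldenRatio_pos m
  | insert a A hlt ih =>
    have haA : a ∉ A := fun h => lt_irrefl a (hlt a h)
    have hrest : goldenSum A < φ ^ (a - 1) := by
      refine ih (hA.mono (subset_insert a A)) fun i hi => ?_
      have : i + 1 ≠ a := fun h => hA i (mem_insert_of_mem hi) (h ▸ mem_insert_self a A)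
      have := hlt i hi
      omega
    calc goldenSum (insert a A) = φ ^ a + goldenSum A := goldenSum_insert haA
      _ < φ ^ (a - 1 + 2) := by rw [goldenRatio_zpow_add_two, sub_add_cancel]; linarith
      _ ≤ φ ^ m :=
        zpow_le_zpow_right₀ one_lt_goldenRatio.le (by linarith [hm a (mem_insert_self a A)])

theorem IsSparse.goldenSum_sdiff_lt {A B : Finset ℤ} (hB : IsSparse B) {m : ℤ} (hm : m ∈ A \ B)
    (hle : ∀ i ∈ B \ A, i ≤ m) : goldenSum (B \ A) < goldenSum (A \ B) := by
  refine lt_of_lt_of_le ((hB.mono sdiff_subset).goldenSum_lt_zpow fun i hi => ?_)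
    (zpow_le_goldenSum hm)
  refine (hle i hi).lt_of_ne ?_
  rintro rfl
  exact (mem_sdiff.1 hi).2 (mem_sdiff.1 hm).1

theorem IsSparse.eq_of_goldenSum_eq {A B : Finset ℤ} (hA : IsSparse A) (hB : IsSparse B)
    (h : goldenSum A = goldenSum B) : A = B := by
  by_contra hne
  have hsd : goldenSum (A \ B) = goldenSum (B \ A) := by
    have hA' := sum_sdiff (f := fun i => φ ^ i) (inter_subset_left : A ∩ B ⊆ A)
    have hB' := sum_sdiff (f := fun i => φ ^ i) (inter_subset_right : A ∩ B ⊆ B)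
    rw [sdiff_inter_self_left] at hA'
    rw [sdiff_inter_self_right] at hB'
    unfold goldenSum at h ⊢
    linarith
  have hD : (A \ B ∪ B \ A).Nonempty := by
    rw [nonempty_iff_ne_empty, Ne, union_eq_empty, sdiff_eq_empty_iff_subset,
      sdiff_eq_empty_iff_subset]
    exact fun h => hne (h.1.antisymm h.2)
  obtain ⟨m, hm, hmax⟩ := exists_max_image _ id hD
  rcases mem_union.1 hm with hm | hm
  · exact (hB.goldenSum_sdiff_lt hm fun i hi => hmax i (mem_union_right _ hi)).ne hsd.symm
  · exact (hA.goldenSum_sdiff_lt hm fun i hi => hmax i (mem_union_left _ hi)).ne hsd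

theorem IsSparse.abs_sum_goldenConj_zpow_lt {A : Finset ℤ} (hA : IsSparse A) {m : ℤ}
    (hm : ∀ i ∈ A, m < i) : |∑ i ∈ A, ψ ^ i| < φ ^ (-m) := by
  have hneg : IsSparse (A.image Neg.neg) := by
    simp only [IsSparse, mem_image]
    rintro _ ⟨i, hi, rfl⟩ ⟨j, hj, hji⟩
    exact hA j hj (by rwa [show j + 1 = i by omega])
  calc |∑ i ∈ A, ψ ^ i| ≤ ∑ i ∈ A, φ ^ (-i) :=
        (abs_sum_le_sum_abs _ _).trans_eq (sum_congr rfl fun i _ => abs_goldenConj_zpow i)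
    _ = goldenSum (A.image Neg.neg) := (sum_image fun _ _ _ _ => neg_inj.1).symm
    _ < φ ^ (-m) := hneg.goldenSum_lt_zpow <| by
      simp only [mem_image, forall_exists_index, and_imp]
      rintro _ i hi rfl
      linarith [hm i hi]

theorem exists_int_sub_goldenSum_eq (A : Finset ℤ) :
    ∃ M : ℤ, (M : ℝ) - goldenSum A = ∑ i ∈ A with 0 ≤ i, ψ ^ i - goldenSum {i ∈ A | i < 0} := by
  choose L hL using exists_int_goldenRatio_zpow_add_goldenConj_zpow
  refine ⟨∑ i ∈ A with 0 ≤ i, L i.toNat, ?_⟩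
  have hLucas : ∀ i ∈ {i ∈ A | 0 ≤ i}, (L i.toNat : ℝ) = φ ^ i + ψ ^ i := fun i hi => by
    rw [← hL, Int.toNat_of_nonneg (mem_filter.1 hi).2]
  have hsplit := sum_filter_add_sum_filter_not A (fun i => 0 ≤ i) (fun i => φ ^ i)
  simp only [not_le] at hsplit
  rw [Int.cast_sum, sum_congr rfl hLucas, sum_add_distrib, goldenSum, goldenSum, ← hsplit]
  ring

/-- The nonnegative part of the word ends in `1(00)^i1`. -/
def HasOddGap (S : Finset ℤ) : Prop :=
  ∃ i : ℕ, 0 ∈ S ∧ (2 * i + 1 : ℤ) ∈ S ∧ ∀ k : ℤ, 1 ≤ k → k ≤ 2 * i → k ∉ S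

theorem IsSparse.abs_sum_goldenConj_sub_lt {A : Finset ℤ} (hA : IsSparse A) {i : ℕ} (h0 : 0 ∈ A)
    (hodd : (2 * i + 1 : ℤ) ∈ A) (hgap : ∀ k : ℤ, 1 ≤ k → k ≤ 2 * i → k ∉ A) :
    |∑ j ∈ A with 0 ≤ j, ψ ^ j - (1 - φ ^ (-(2 * i + 1 : ℤ)))| < φ ^ (-(2 * i + 2 : ℤ)) := by
  set R := ({j ∈ A | 0 ≤ j}.erase 0).erase (2 * i + 1)
  have hsplit : ∑ j ∈ A with 0 ≤ j, ψ ^ j = 1 - φ ^ (-(2 * i + 1 : ℤ)) + ∑ j ∈ R, ψ ^ j := by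
    rw [← add_sum_erase _ _ (mem_filter.2 ⟨h0, le_rfl⟩),
      ← add_sum_erase _ _ (mem_erase.2 ⟨by omega, mem_filter.2 ⟨hodd, by omega⟩⟩),
      zpow_zero, Odd.goldenConj_zpow ⟨i, rfl⟩]
    ring
  rw [hsplit, add_sub_cancel_left]
  refine (hA.mono fun j hj => ?_).abs_sum_goldenConj_zpow_lt fun j hj => ?_
  · exact (mem_filter.1 (mem_of_mem_erase (mem_of_mem_erase hj))).1
  simp only [R, mem_erase, mem_filter] at hj
  obtain ⟨hj1, hj0, hjA, hjnn⟩ := hj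
  have : j ≠ 2 * i + 2 := by rintro rfl; exact hA _ hodd hjA
  have : ¬ (1 ≤ j ∧ j ≤ 2 * i) := fun h => hgap j h.1 h.2 hjA
  omega

theorem IsSparse.not_hasOddGap {A : Finset ℤ} (hA : IsSparse A) {z : ℤ}
    (hz : goldenSum A = z) : ¬ HasOddGap A := by
  rintro ⟨i, h0, hodd, hgap⟩
  rcases Nat.eq_zero_or_pos i with rfl | hi
  · exact hA 0 h0 (by simpa using hodd)
  obtain ⟨M, hM⟩ := exists_int_sub_goldenSum_eq A
  obtain ⟨hPlo, hPhi⟩ := abs_lt.1 (hA.abs_sum_goldenConj_sub_lt h0 hodd hgap)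
  have hN : goldenSum {j ∈ A | j < 0} < φ ^ (-1 : ℤ) := by
    refine (hA.mono (filter_subset _ _)).goldenSum_lt_zpow fun j hj => ?_
    obtain ⟨hjA, hj⟩ := mem_filter.1 hj
    have : j ≠ -1 := by rintro rfl; exact hA _ hjA h0
    omega
  have hN0 := goldenSum_nonneg {j ∈ A | j < 0}
  have e1 := goldenRatio_zpow_neg_eq_add (2 * i)
  have e2 := goldenRatio_zpow_neg_eq_add 0
  rw [neg_zero, zpow_zero, zero_add, zero_add] at e2
  have hmono : φ ^ (-(2 * i : ℤ)) ≤ φ ^ (-2 : ℤ) :=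
    zpow_le_zpow_right₀ one_lt_goldenRatio.le (by omega)
  have hstrict : φ ^ (-(2 * i + 2 : ℤ)) < φ ^ (-(2 * i + 1 : ℤ)) :=
    zpow_lt_zpow_right₀ one_lt_goldenRatio (by omega)
  rw [hz] at hM
  have hlo : (0 : ℤ) < M - z := by exact_mod_cast (show (0 : ℝ) < M - z by linarith)
  have hhi : M - z < (1 : ℤ) := by exact_mod_cast (show (M - z : ℝ) < 1 by linarith)
  omega

def IsIntegralCompletion (S A : Finset ℤ) : Prop :=
  IsSparse A ∧ (∃ z : ℤ, goldenSum A = z) ∧ ∀ i, 0 ≤ i → (i ∈ A ↔ i ∈ S)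

theorem exists_int_goldenSum_add {A : Finset ℤ} (hA : ∃ z : ℤ, goldenSum A = z) {t : ℤ}
    (ht : 0 ≤ t) : ∃ z : ℤ, goldenSum A + (φ ^ t + ψ ^ t) = z := by
  obtain ⟨z, hz⟩ := hA
  obtain ⟨L, hL⟩ := exists_int_goldenRatio_zpow_add_goldenConj_zpow t.toNat
  rw [Int.toNat_of_nonneg ht] at hL
  exact ⟨z + L, by rw [hz, hL]; push_cast; ring⟩

theorem IsIntegralCompletion.insert_even {S A : Finset ℤ} (h : IsIntegralCompletion S A)
    {t : ℤ} (ht : Even t) (ht0 : 0 < t) (hbound : ∀ i ∈ A, |i| + 2 ≤ t) :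
    IsIntegralCompletion (insert t S) (insert t (insert (-t) A)) ∧
      IsLeast ↑(insert t (insert (-t) A)) (-t) := by
  obtain ⟨hA, hz, hmem⟩ := h
  have hbound' : ∀ i ∈ A, -t + 2 ≤ i ∧ i + 2 ≤ t := fun i hi => by
    have := hbound i hi
    constructor <;> cases abs_cases i <;> omega
  refine ⟨⟨?_, ?_, fun i hi => ?_⟩, by simp, fun i hi => ?_⟩
  · intro i hi hi1
    simp only [mem_insert] at hi hi1
    rcases hi with rfl | rfl | hi <;> rcases hi1 with hi1 | hi1 | hi1 <;>
      first | omega | exact hA i hi hi1 | (have := hbound' _ hi1; omega) |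
        (have := hbound' _ hi; omega)
  · have hnot : t ∉ insert (-t) A := by
      simp only [mem_insert, not_or]
      exact ⟨by omega, fun hA' => by have := hbound' _ hA'; omega⟩
    have hnot' : -t ∉ A := fun hA' => by have := hbound' _ hA'; omega
    obtain ⟨z, hz⟩ := exists_int_goldenSum_add hz ht0.le
    refine ⟨z, ?_⟩
    rw [goldenSum_insert hnot, goldenSum_insert hnot', ← hz, ht.goldenConj_zpow]
    ring
  · have : i ≠ -t := by omega
    simp only [mem_insert, hmem i hi, this, false_or]
  · simp only [coe_insert, Set.mem_insert_iff, mem_coe] at hi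
    rcases hi with rfl | rfl | hi
    · omega
    · rfl
    · linarith [hbound' i hi]

def oddChain (u k : ℕ) : Finset ℤ := (Ico u k).image fun j : ℕ => -(2 * j + 1 : ℤ)

theorem goldenSum_oddChain {u k : ℕ} (h : u ≤ k) :
    goldenSum (oddChain u k) = φ ^ (-(2 * u : ℤ)) - φ ^ (-(2 * k : ℤ)) := by
  rw [goldenSum, oddChain, sum_image fun a _ b _ hab => by simpa using hab]
  have htel := sum_Ico_sub (fun j : ℕ => -φ ^ (-(2 * j : ℤ))) h
  simp only [neg_sub_neg] at htel
  rw [← htel]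
  refine sum_congr rfl fun j _ => ?_
  have := goldenRatio_zpow_neg_eq_add (2 * j)
  push_cast
  rw [show -(2 * ((j : ℤ) + 1)) = -(2 * j + 2) by ring]
  linarith

/-- Adds the digit `2k+1`; its conjugate `ψ^(2k+1) = -φ^(-(2k+1))` is compensated by trading the
lowest digit `-2u` for `φ^(-(2u+1)) + φ^(-(2u+3)) + ⋯ + φ^(-(2k-1)) + φ^(-(2k+2))`. -/
def addOddDigit (A : Finset ℤ) (u k : ℕ) : Finset ℤ :=
  insert (2 * k + 1 : ℤ) (insert (-(2 * k + 2 : ℤ)) (A.erase (-(2 * u : ℤ)) ∪ oddChain u k))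

theorem IsIntegralCompletion.insert_odd {S A : Finset ℤ} (h : IsIntegralCompletion S A)
    {u k : ℕ} (huk : u ≤ k) (hμ : IsLeast ↑A (-(2 * u : ℤ)))
    (hbound : ∀ i ∈ A.erase (-(2 * u)), i + 2 ≤ 2 * k + 1) :
    IsIntegralCompletion (insert (2 * k + 1 : ℤ) (S.erase (-(2 * u)))) (addOddDigit A u k) ∧
      IsLeast (addOddDigit A u k : Set ℤ) (-(2 * k + 2)) := by
  obtain ⟨hA, hz, hmem⟩ := h
  have hA2 : ∀ i ∈ A, i ≠ -(2 * u) → -(2 * u) + 2 ≤ i := fun i hi hne => by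
    have := hμ.2 hi
    have : i ≠ -(2 * u) + 1 := by rintro rfl; exact hA _ hμ.1 hi
    omega
  refine ⟨⟨?_, ?_, fun i hi => ?_⟩, by simp [addOddDigit], fun i hi => ?_⟩
  · intro x hx hx1
    simp only [addOddDigit, oddChain, mem_insert, mem_union, mem_erase, mem_image, mem_Ico]
      at hx hx1
    rcases hx with rfl | rfl | ⟨hne, hxA⟩ | ⟨j, hj, rfl⟩ <;>
      rcases hx1 with h1 | h1 | ⟨hne1, hx1A⟩ | ⟨j1, hj1, h1⟩ <;>
      first | omega | exact hA _ hxA hx1A |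
        (have := hbound _ (mem_erase.2 ⟨hne1, hx1A⟩); have := hA2 _ hx1A hne1; omega) |
        (have := hbound _ (mem_erase.2 ⟨hne, hxA⟩); have := hA2 _ hxA hne; omega)
  · have hdisj : Disjoint (A.erase (-(2 * u))) (oddChain u k) := by
      simp only [disjoint_left, oddChain, mem_erase, mem_image, mem_Ico, not_exists, not_and]
      rintro _ ⟨hne, hxA⟩ j hj rfl
      have := hA2 _ hxA hne
      omega
    have hlow : -(2 * k + 2 : ℤ) ∉ A.erase (-(2 * u)) ∪ oddChain u k := by
      simp only [oddChain, mem_union, mem_erase, mem_image, mem_Ico, not_or, not_exists, not_and]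
      exact ⟨fun hne hA' => by have := hμ.2 hA'; omega, fun j _ _ => by omega⟩
    have htop :
        (2 * k + 1 : ℤ) ∉ insert (-(2 * k + 2 : ℤ)) (A.erase (-(2 * u)) ∪ oddChain u k) := by
      simp only [oddChain, mem_insert, mem_union, mem_erase, mem_image, mem_Ico, not_or,
        not_exists, not_and]
      exact ⟨by omega, fun hne hA' => by have := hbound _ (mem_erase.2 ⟨hne, hA'⟩); omega,
        fun j _ _ => by omega⟩
    obtain ⟨z, hz⟩ := exists_int_goldenSum_add hz (t := 2 * k + 1) (by omega)
    have hrec := goldenRatio_zpow_neg_eq_add (2 * k)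
    refine ⟨z, ?_⟩
    rw [addOddDigit, goldenSum_insert htop, goldenSum_insert hlow, goldenSum, sum_union hdisj,
      sum_erase_eq_sub hμ.1, ← goldenSum, ← goldenSum, goldenSum_oddChain huk, ← hz,
      Odd.goldenConj_zpow ⟨k, rfl⟩]
    linarith
  · have h1 : i ≠ -(2 * k + 2) := by omega
    have h2 : ¬ ∃ j : ℕ, (u ≤ j ∧ j < k) ∧ -(2 * j + 1 : ℤ) = i := by rintro ⟨j, -, rfl⟩; omega
    simp only [addOddDigit, oddChain, mem_insert, mem_union, mem_erase, mem_image, mem_Ico,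
      hmem i hi, h1, h2, false_or, or_false]
  · simp only [addOddDigit, oddChain, coe_insert, coe_union, coe_erase, coe_image, coe_Ico,
      Set.mem_insert_iff, Set.mem_union, Set.mem_sdiff, Set.mem_image, Set.mem_Ico] at hi
    rcases hi with rfl | rfl | ⟨hiA, -⟩ | ⟨j, hj, rfl⟩
    · omega
    · rfl
    · have := hμ.2 hiA
      omega
    · omega

theorem HasOddGap.insert_of_forall_lt {S : Finset ℤ} (h : HasOddGap S) {t : ℤ}
    (hlt : ∀ x ∈ S, x < t) : HasOddGap (insert t S) := by
  obtain ⟨i, h0, hodd, hgap⟩ := h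
  refine ⟨i, mem_insert_of_mem h0, mem_insert_of_mem hodd, fun k hk1 hk2 hk => ?_⟩
  rcases mem_insert.1 hk with rfl | hk
  · linarith [hlt _ hodd]
  · exact hgap k hk1 hk2 hk

theorem isIntegralCompletion_empty : IsIntegralCompletion ∅ ∅ :=
  ⟨by simp [IsSparse], ⟨0, by simp [goldenSum]⟩, by simp⟩

theorem isIntegralCompletion_zero : IsIntegralCompletion {0} {0} :=
  ⟨by simp [IsSparse], ⟨1, by simp [goldenSum]⟩, by simp⟩

theorem exists_isIntegralCompletion_singleton {t : ℤ} (ht : 0 ≤ t) :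
    ∃ A, IsIntegralCompletion {t} A ∧ IsLeast (A : Set ℤ) (-(t + t % 2)) := by
  obtain ⟨k, rfl | rfl⟩ := Int.even_or_odd' t
  · rcases (show 0 ≤ k by omega).eq_or_lt with rfl | hk
    · exact ⟨{0}, isIntegralCompletion_zero, by simp [isLeast_singleton]⟩
    obtain ⟨hB, hleast⟩ :=
      isIntegralCompletion_empty.insert_even ⟨k, two_mul k⟩ (by omega) (by simp)
    exact ⟨_, by simpa using hB, by rwa [Int.mul_emod_right, add_zero]⟩
  lift k to ℕ using (by omega)
  obtain ⟨hB, hleast⟩ := isIntegralCompletion_zero.insert_odd (u := 0) (k := k)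
    (Nat.zero_le k) (by simp [isLeast_singleton]) (by simp)
  exact ⟨_, by simpa using hB, by convert hleast using 2; omega⟩

theorem IsIntegralCompletion.exists_insert {S A : Finset ℤ} (h : IsIntegralCompletion S A)
    {t' t : ℤ} (ht' : IsGreatest (S : Set ℤ) t') (hμ : IsLeast (A : Set ℤ) (-(t' + t' % 2)))
    (hnn : ∀ i ∈ S, 0 ≤ i) (htt' : t' + 2 ≤ t) (hgap : ¬ HasOddGap (insert t S)) :
    ∃ B, IsIntegralCompletion (insert t S) B ∧ IsLeast (B : Set ℤ) (-(t + t % 2)) := by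
  have ht'0 : 0 ≤ t' := hnn _ ht'.1
  have hAbound : ∀ i ∈ A, -(t' + t' % 2) ≤ i ∧ i ≤ t' := fun i hi => by
    refine ⟨hμ.2 hi, ?_⟩
    rcases lt_or_ge i 0 with hi0 | hi0
    · omega
    · exact ht'.2 ((h.2.2 i hi0).1 hi)
  obtain ⟨k, rfl | rfl⟩ := Int.even_or_odd' t
  · obtain ⟨hB, hleast⟩ := h.insert_even ⟨k, two_mul k⟩ (by omega) fun i hi => by
      have := hAbound i hi
      cases abs_cases i <;> omega
    exact ⟨_, hB, by rwa [Int.mul_emod_right, add_zero]⟩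
  lift k to ℕ using (by omega)
  rcases ht'0.eq_or_lt with rfl | ht'0
  · refine absurd ⟨k, mem_insert_of_mem ht'.1, by simp, fun j hj1 hj2 hj => ?_⟩ hgap
    rcases mem_insert.1 hj with rfl | hj
    · omega
    · linarith [ht'.2 hj]
  set u := ((t' + t' % 2) / 2).toNat
  have herase : S.erase (-(2 * u)) = S :=
    erase_eq_of_notMem fun h => by have := hnn _ h; omega
  obtain ⟨hB, hleast⟩ := h.insert_odd (u := u) (k := k) (by omega)
    (by convert hμ using 2; omega) fun i hi => by linarith [hAbound i (mem_of_mem_erase hi)]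
  exact ⟨_, by rwa [herase] at hB, by convert hleast using 2; omega⟩

theorem exists_isIntegralCompletion_isLeast {S : Finset ℤ} (hS : IsSparse S)
    (hnn : ∀ i ∈ S, 0 ≤ i) (hgap : ¬ HasOddGap S) :
    ∃ A, IsIntegralCompletion S A ∧
      ∀ t, IsGreatest (S : Set ℤ) t → IsLeast (A : Set ℤ) (-(t + t % 2)) := by
  induction S using Finset.induction_on_max with
  | empty => exact ⟨∅, isIntegralCompletion_empty, by simp [IsGreatest]⟩
  | insert t S hlt ih =>
    suffices ∃ A, IsIntegralCompletion (insert t S) A ∧ IsLeast (A : Set ℤ) (-(t + t % 2)) by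
      obtain ⟨A, hA, hleast⟩ := this
      refine ⟨A, hA, fun t' ht' => ?_⟩
      obtain rfl : t' = t := (ht'.2 (by simp)).antisymm' <| by
        rcases mem_insert.1 (mem_coe.1 ht'.1) with rfl | h
        · rfl
        · exact (hlt _ h).le
      exact hleast
    rcases S.eq_empty_or_nonempty with rfl | hne
    · simpa using exists_isIntegralCompletion_singleton (hnn t (mem_insert_self t ∅))
    have hnn' : ∀ i ∈ S, 0 ≤ i := fun i hi => hnn i (mem_insert_of_mem hi)
    obtain ⟨A, hA, hleast⟩ :=
      ih (hS.mono (subset_insert _ _)) hnn' fun h => hgap (h.insert_of_forall_lt hlt)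
    have htop := S.isGreatest_max' hne
    refine hA.exists_insert htop (hleast _ htop) hnn' ?_ hgap
    have := hlt _ htop.1
    have : S.max' hne + 1 ≠ t := fun h => hS _ (mem_insert_of_mem htop.1) (h ▸ mem_insert_self t S)
    omega

theorem exists_isIntegralCompletion_iff {S : Finset ℤ} (hnn : ∀ i ∈ S, 0 ≤ i) :
    (∃ A, IsIntegralCompletion S A) ↔ IsSparse S ∧ ¬ HasOddGap S := by
  refine ⟨fun ⟨A, hA, ⟨z, hz⟩, hmem⟩ => ⟨hA.mono fun i hi => (hmem i (hnn i hi)).2 hi, ?_⟩,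
    fun ⟨hS, hgap⟩ => (exists_isIntegralCompletion_isLeast hS hnn hgap).imp fun _ h => h.1⟩
  rintro ⟨i, h0, hodd, hgap⟩
  refine hA.not_hasOddGap hz ⟨i, (hmem 0 le_rfl).2 h0, (hmem _ (by omega)).2 hodd,
    fun k hk1 hk2 hk => hgap k hk1 hk2 ((hmem k (by omega)).1 hk)⟩

theorem apply_eq_one_iff_mem_support {a : ℤ →₀ ℕ} (ha : ∀ i, a i ≤ 1) {i : ℤ} :
    a i = 1 ↔ i ∈ a.support := by
  rw [Finsupp.mem_support_iff]
  have := ha i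
  omega

theorem IsPhiRep.eq_goldenSum {x : ℝ} {a : ℤ →₀ ℕ} (h : IsPhiRep x a) :
    x = goldenSum a.support := by
  rw [h.2, goldenSum]
  refine sum_congr rfl fun i hi => ?_
  rw [(apply_eq_one_iff_mem_support h.1).2 hi, Nat.cast_one, one_mul]
  rfl

theorem IsCanonRep.isSparse {x : ℝ} {a : ℤ →₀ ℕ} (h : IsCanonRep x a) : IsSparse a.support :=
  fun i hi hi1 => by
    have := h.2 i
    rw [(apply_eq_one_iff_mem_support h.1.1).2 hi, (apply_eq_one_iff_mem_support h.1.1).2 hi1]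
      at this
    exact one_ne_zero this

theorem exists_canonRep_iff_exists_isIntegralCompletion {d : ℕ → ℤ →₀ ℕ}
    (hd : ∀ n : ℕ, IsCanonRep n (d n)) (S : Finset ℤ) :
    (∃ n, ∀ i, 0 ≤ i → (i ∈ (d n).support ↔ i ∈ S)) ↔ ∃ A, IsIntegralCompletion S A := by
  refine ⟨fun ⟨n, hn⟩ => ⟨_, (hd n).isSparse, ⟨n, ((hd n).1.eq_goldenSum).symm⟩, hn⟩, ?_⟩
  rintro ⟨A, hA, ⟨z, hz⟩, hmem⟩
  have hz0 : 0 ≤ z := by exact_mod_cast hz ▸ goldenSum_nonneg A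
  refine ⟨z.toNat, fun i hi => ?_⟩
  rw [(hd _).isSparse.eq_of_goldenSum_eq hA ?_, hmem i hi]
  rw [← (hd _).1.eq_goldenSum, hz]
  exact_mod_cast Int.toNat_of_nonneg hz0

def wordSupport (r : ℕ) (b : ℕ → ℕ) : Finset ℤ :=
  ((range r).filter fun j => b j = 1).image (↑)

theorem mem_wordSupport {r : ℕ} {b : ℕ → ℕ} {i : ℤ} :
    i ∈ wordSupport r b ↔ ∃ j : ℕ, j < r ∧ b j = 1 ∧ (j : ℤ) = i := by
  simp [wordSupport, and_assoc]

theorem natCast_mem_wordSupport {r : ℕ} {b : ℕ → ℕ} {j : ℕ} :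
    (j : ℤ) ∈ wordSupport r b ↔ j < r ∧ b j = 1 := by
  simp [mem_wordSupport]

theorem nonneg_of_mem_wordSupport {r : ℕ} {b : ℕ → ℕ} {i : ℤ} (hi : i ∈ wordSupport r b) :
    0 ≤ i := by
  obtain ⟨j, -, -, rfl⟩ := mem_wordSupport.1 hi
  positivity

theorem isSparse_wordSupport_iff {r : ℕ} {b : ℕ → ℕ} (hb : ∀ j, b j ≤ 1) :
    IsSparse (wordSupport r b) ↔ ∀ j : ℕ, j < r - 1 → b j * b (j + 1) = 0 := by
  constructor
  · intro h j hj
    by_contra hne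
    obtain ⟨h1, h2⟩ := mul_ne_zero_iff.1 hne
    refine h j (natCast_mem_wordSupport.2
      ⟨by omega, (hb j).antisymm (Nat.one_le_iff_ne_zero.2 h1)⟩) ?_
    rw [← Nat.cast_succ, natCast_mem_wordSupport]
    exact ⟨by omega, (hb _).antisymm (Nat.one_le_iff_ne_zero.2 h2)⟩
  · intro h i hi hi1
    obtain ⟨j, hj, hbj, rfl⟩ := mem_wordSupport.1 hi
    rw [← Nat.cast_succ, natCast_mem_wordSupport] at hi1
    have := h j (by omega)
    rw [hbj, hi1.2] at this
    omega

theorem hasOddGap_wordSupport_iff {r : ℕ} {b : ℕ → ℕ} (hb : ∀ j, b j ≤ 1) :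
    HasOddGap (wordSupport r b) ↔ ∃ i : ℕ, 2 * i + 1 ≤ r - 1 ∧ b 0 = 1 ∧ b (2 * i + 1) = 1 ∧
      ∀ k : ℕ, 1 ≤ k → k ≤ 2 * i → b k = 0 := by
  refine exists_congr fun i => ?_
  rw [show (0 : ℤ) = ((0 : ℕ) : ℤ) from rfl,
    show (2 * i + 1 : ℤ) = ((2 * i + 1 : ℕ) : ℤ) by push_cast; rfl,
    natCast_mem_wordSupport, natCast_mem_wordSupport]
  constructor
  · rintro ⟨⟨-, h0⟩, ⟨hr, h1⟩, hgap⟩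
    refine ⟨by omega, h0, h1, fun k hk1 hk2 => ?_⟩
    have := hgap k (by omega) (by omega)
    rw [natCast_mem_wordSupport] at this
    have := hb k
    omega
  · rintro ⟨hr, h0, h1, hgap⟩
    refine ⟨⟨by omega, h0⟩, ⟨by omega, h1⟩, fun k hk1 hk2 hk => ?_⟩
    obtain ⟨j, -, hj, rfl⟩ := mem_wordSupport.1 hk
    have := hgap j (by omega) (by omega)
    omega

theorem digits_eq_iff_support_inter_nonneg {a : ℤ →₀ ℕ} (ha : ∀ i, a i ≤ 1) {r : ℕ} (hr : 1 ≤ r)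
    {b : ℕ → ℕ} (hb : ∀ j, b j ≤ 1) :
    ((∀ j : ℕ, j ≤ r - 1 → a j = b j) ∧ ∀ j : ℕ, r ≤ j → a j = 0) ↔
      ∀ i, 0 ≤ i → (i ∈ a.support ↔ i ∈ wordSupport r b) := by
  constructor
  · rintro ⟨hlow, hhigh⟩ i hi
    lift i to ℕ using hi
    rw [← apply_eq_one_iff_mem_support ha, natCast_mem_wordSupport]
    rcases lt_or_ge i r with h | h
    · rw [hlow i (by omega)]
      simp [h]
    · rw [hhigh i h]
      omega
  · intro h
    refine ⟨fun j hj => ?_, fun j hj => ?_⟩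
    · have := h j (by positivity)
      rw [← apply_eq_one_iff_mem_support ha, natCast_mem_wordSupport] at this
      have := ha j
      have := hb j
      omega
    · rw [← Finsupp.notMem_support_iff, h j (by positivity), natCast_mem_wordSupport]
      omega

/-- A binary word `b_{r-1} ⋯ b_0` occurs as the nonnegative-position digits of the
canonical φ-representation of some natural number iff it has no two adjacent 1's and
no suffix of the form 1(00)^i 1. Here `d n` denotes the canonical φ-representation of `n`. -/
theorem left_part_characterization
    (d : ℕ → ℤ →₀ ℕ) (hd : ∀ n : ℕ, IsCanonRep n (d n))
    (r : ℕ) (hr : 1 ≤ r) (b : ℕ → ℕ) (hb : ∀ j, b j ≤ 1) :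
    (∃ n : ℕ, (∀ j : ℕ, j ≤ r - 1 → d n (j : ℤ) = b j) ∧
        ∀ j : ℕ, r ≤ j → d n (j : ℤ) = 0) ↔
      ((∀ j : ℕ, j < r - 1 → b j * b (j + 1) = 0) ∧
        ¬ ∃ i : ℕ, 2 * i + 1 ≤ r - 1 ∧ b 0 = 1 ∧ b (2 * i + 1) = 1 ∧
            ∀ k : ℕ, 1 ≤ k → k ≤ 2 * i → b k = 0) := by
  rw [← isSparse_wordSupport_iff hb, ← hasOddGap_wordSupport_iff hb,
    ← exists_isIntegralCompletion_iff fun _ => nonneg_of_mem_wordSupport,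
    ← exists_canonRep_iff_exists_isIntegralCompletion hd]
  exact exists_congr fun n => digits_eq_iff_support_inter_nonneg (hd n).1.1 hr hb
end

section
/- Define ℓ(0) = 0 and, for n ≥ 1, ℓ(n) = 1 + max{i ∈ ℤ : d_i(n) = 1} (the length of the left part of the canonical φ-representation of n). Then for every n ≥ 1, ℓ(n) − ℓ(n−1) = 1 if and only if n = 1, or n = L_{2i} for some i ≥ 1, or n = L_{2i−1} + 1 for some i ≥ 1. -/
/-- Lucas numbers: L₀ = 2, L₁ = 1, L_{n+2} = L_{n+1} + L_n. -/
def lucas : ℕ → ℕ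
  | 0 => 2
  | 1 => 1
  | n + 2 => lucas (n + 1) + lucas n

/-! If `i` is the leading digit of `n`, then `φ ^ i ≤ n < φ ^ (i + 1)`, because a sum of pairwise
non-adjacent powers of `φ` with exponents at most `i` stays below `φ ^ (i + 1)`. Hence
`k < ℓ n ↔ φ ^ k ≤ n ↔ ⌈φ ^ k⌉₊ ≤ n`: `ℓ n` counts the terms of the strictly increasing sequence
`⌈φ ^ k⌉₊` that are at most `n`, so `ℓ` increases exactly at the values of that sequence.
By Binet, `φ ^ k = L_k - ψ ^ k` with `|ψ| < 1`, so `⌈φ ^ k⌉₊` is `1` for `k = 0`, `L_k` for even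
`k ≥ 2` and `L_k + 1` for odd `k`. -/

open Real goldenRatio

lemma phi_eq_goldenRatio : phi = φ := rfl

lemma goldenRatio_zpow_add_one (i : ℤ) : φ ^ (i + 1) = φ ^ i + φ ^ (i - 1) := by
  have h : φ ^ (i + 1) = φ ^ (i - 1) * φ ^ 2 := by
    rw [← zpow_natCast, ← zpow_add₀ goldenRatio_ne_zero]; congr 1; push_cast; ring
  rw [h, goldenRatio_sq, ← sub_add_cancel i 1, zpow_add_one₀ goldenRatio_ne_zero,
    add_sub_cancel_right]
  ring

lemma sum_goldenRatio_zpow_lt {S : Finset ℤ} (hsep : ∀ j ∈ S, j + 1 ∉ S) {i : ℤ}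
    (hle : ∀ j ∈ S, j ≤ i) : ∑ j ∈ S, φ ^ j < φ ^ (i + 1) := by
  induction S using Finset.induction_on_max generalizing i with
  | empty => simpa using zpow_pos goldenRatio_pos (i + 1)
  | insert a S hlt ih =>
    have haS : a ∉ S := fun h => lt_irrefl a (hlt a h)
    have hS : ∀ j ∈ S, j ≤ a - 2 := by
      intro j hj
      have hj1 : j + 1 ≠ a := fun h =>
        hsep j (Finset.mem_insert_of_mem hj) (h ▸ Finset.mem_insert_self a S)
      have := hlt j hj
      omega
    have hrec := ih (fun j hj h =>
      hsep j (Finset.mem_insert_of_mem hj) (Finset.mem_insert_of_mem h)) hS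
    rw [show a - 2 + 1 = a - 1 by ring] at hrec
    calc ∑ j ∈ insert a S, φ ^ j = φ ^ a + ∑ j ∈ S, φ ^ j := Finset.sum_insert haS
      _ < φ ^ a + φ ^ (a - 1) := by linarith
      _ = φ ^ (a + 1) := (goldenRatio_zpow_add_one a).symm
      _ ≤ φ ^ (i + 1) := zpow_le_zpow_right₀ one_lt_goldenRatio.le
        (by linarith [hle a (Finset.mem_insert_self a S)])

lemma IsPhiRep.mem_support_iff {x : ℝ} {a : ℤ →₀ ℕ} (h : IsPhiRep x a) (j : ℤ) :
    j ∈ a.support ↔ a j = 1 := by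
  have := h.1 j
  rw [Finsupp.mem_support_iff]
  omega

lemma IsPhiRep.eq_sum_zpow {x : ℝ} {a : ℤ →₀ ℕ} (h : IsPhiRep x a) :
    x = ∑ j ∈ a.support, φ ^ j := by
  rw [h.2]
  refine Finset.sum_congr rfl fun j hj => ?_
  rw [(h.mem_support_iff j).1 hj, Nat.cast_one, one_mul, phi_eq_goldenRatio]

lemma IsPhiRep.zpow_le {x : ℝ} {a : ℤ →₀ ℕ} (h : IsPhiRep x a) {i : ℤ} (hi : a i = 1) :
    φ ^ i ≤ x := by
  rw [h.eq_sum_zpow]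
  exact Finset.single_le_sum (fun j _ => (zpow_pos goldenRatio_pos j).le)
    ((h.mem_support_iff i).2 hi)

lemma IsCanonRep.lt_zpow_add_one {x : ℝ} {a : ℤ →₀ ℕ} (h : IsCanonRep x a) {i : ℤ}
    (hmax : ∀ j, a j = 1 → j ≤ i) : x < φ ^ (i + 1) := by
  have hsupp := h.1.mem_support_iff
  rw [h.1.eq_sum_zpow]
  refine sum_goldenRatio_zpow_lt (fun j hj hj1 => ?_) fun j hj => hmax j ((hsupp j).1 hj)
  have := h.2 j
  rw [(hsupp j).1 hj, (hsupp (j + 1)).1 hj1] at this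
  exact one_ne_zero this

lemma zpow_le_iff_le_of_mem_Ico {α : Type*} [Field α] [LinearOrder α] [IsStrictOrderedRing α]
    {b x : α} (hb : 1 < b) {i : ℤ} (hx : x ∈ Set.Ico (b ^ i) (b ^ (i + 1))) (k : ℤ) :
    b ^ k ≤ x ↔ k ≤ i := by
  constructor
  · intro hk
    have := (zpow_lt_zpow_iff_right₀ hb).1 (hk.trans_lt hx.2)
    omega
  · intro hk
    exact (zpow_le_zpow_right₀ hb.le hk).trans hx.1

lemma coe_lucas (n : ℕ) : (lucas n : ℝ) = φ ^ n + ψ ^ n := by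
  induction n using Nat.twoStepInduction with
  | zero => norm_num [lucas]
  | one => simp [lucas, goldenRatio_add_goldenConj]
  | more n ih0 ih1 =>
    rw [lucas, Nat.cast_add, ih0, ih1]
    linear_combination -(φ ^ n * goldenRatio_sq + ψ ^ n * goldenConj_sq)

lemma ceil_natCast_sub {n : ℕ} {t : ℝ} (h0 : 0 ≤ t) (h1 : t < 1) : ⌈(n : ℝ) - t⌉₊ = n := by
  rcases Nat.eq_zero_or_pos n with rfl | hn
  · simpa using h0
  rw [Nat.ceil_eq_iff hn.ne', Nat.cast_pred hn]
  constructor <;> linarith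

lemma ceil_goldenRatio_pow_even {i : ℕ} (hi : i ≠ 0) : ⌈φ ^ (2 * i)⌉₊ = lucas (2 * i) := by
  have hψ : ψ ^ (2 * i) = (ψ ^ 2) ^ i := pow_mul ψ 2 i
  have hψ2 : 0 ≤ ψ ^ 2 ∧ ψ ^ 2 < 1 :=
    ⟨sq_nonneg ψ, by linarith [goldenConj_sq, goldenConj_neg]⟩
  rw [show φ ^ (2 * i) = (lucas (2 * i) : ℝ) - ψ ^ (2 * i) by rw [coe_lucas]; ring]
  exact ceil_natCast_sub (by rw [hψ]; exact pow_nonneg hψ2.1 i)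
    (by rw [hψ]; exact pow_lt_one₀ hψ2.1 hψ2.2 hi)

lemma ceil_goldenRatio_pow_odd (i : ℕ) : ⌈φ ^ (2 * i + 1)⌉₊ = lucas (2 * i + 1) + 1 := by
  have hψ : ψ ^ (2 * i + 1) = ψ * (ψ ^ 2) ^ i := by rw [pow_succ', pow_mul]
  have hψ2 : 0 ≤ ψ ^ 2 ∧ ψ ^ 2 < 1 :=
    ⟨sq_nonneg ψ, by linarith [goldenConj_sq, goldenConj_neg]⟩
  have hpow := pow_le_one₀ (n := i) hψ2.1 hψ2.2.le
  have hpos := pow_pos (lt_of_le_of_ne hψ2.1 (pow_ne_zero 2 goldenConj_ne_zero).symm) i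
  rw [show φ ^ (2 * i + 1) = ((lucas (2 * i + 1) + 1 : ℕ) : ℝ) - (1 + ψ ^ (2 * i + 1)) by
    push_cast; rw [coe_lucas]; ring]
  refine ceil_natCast_sub ?_ ?_ <;> rw [hψ]
  · nlinarith [neg_one_lt_goldenConj, goldenConj_neg]
  · nlinarith [goldenConj_neg]

lemma exists_ceil_goldenRatio_pow_eq_iff (n : ℕ) :
    (∃ k : ℕ, ⌈φ ^ k⌉₊ = n) ↔
      n = 1 ∨ (∃ i : ℕ, 1 ≤ i ∧ n = lucas (2 * i)) ∨
        ∃ i : ℕ, 1 ≤ i ∧ n = lucas (2 * i - 1) + 1 := by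
  constructor
  · rintro ⟨k, rfl⟩
    obtain ⟨i, rfl | rfl⟩ := Nat.even_or_odd' k
    · rcases Nat.eq_zero_or_pos i with rfl | hi
      · simp
      · exact Or.inr (Or.inl ⟨i, hi, ceil_goldenRatio_pow_even hi.ne'⟩)
    · refine Or.inr (Or.inr ⟨i + 1, by omega, ?_⟩)
      rw [show 2 * (i + 1) - 1 = 2 * i + 1 by omega, ceil_goldenRatio_pow_odd]
  · rintro (rfl | ⟨i, hi, rfl⟩ | ⟨i, hi, rfl⟩)
    · exact ⟨0, by simp⟩
    · exact ⟨2 * i, ceil_goldenRatio_pow_even (by omega)⟩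
    · obtain ⟨j, rfl⟩ : ∃ j, i = j + 1 := ⟨i - 1, by omega⟩
      refine ⟨2 * j + 1, ?_⟩
      rw [show 2 * (j + 1) - 1 = 2 * j + 1 by omega, ceil_goldenRatio_pow_odd]

/-- For `k ≥ 1` consecutive powers of `φ` differ by `φ ^ (k - 1) ≥ 1`. -/
lemma strictMono_ceil_goldenRatio_pow : StrictMono fun k : ℕ => ⌈φ ^ k⌉₊ := by
  refine strictMono_nat_of_lt_succ fun k => Nat.lt_ceil.2 ?_
  rcases k with _ | k
  · simpa using one_lt_goldenRatio
  · calc (⌈φ ^ (k + 1)⌉₊ : ℝ) < φ ^ (k + 1) + 1 := Nat.ceil_lt_add_one (by positivity)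
      _ ≤ φ ^ (k + 1) + φ ^ k := by gcongr; exact one_le_pow₀ one_lt_goldenRatio.le
      _ = φ ^ (k + 1 + 1) := by rw [← goldenRatio_pow_sub_goldenRatio_pow k]; ring

lemma succ_eq_add_one_iff_exists_of_lt_iff_le {c ℓ : ℕ → ℕ} (hc : StrictMono c)
    (hℓ : ∀ m k, k < ℓ m ↔ c k ≤ m) (n : ℕ) :
    ℓ (n + 1) = ℓ n + 1 ↔ ∃ k, c k = n + 1 := by
  constructor
  · intro h
    refine ⟨ℓ n, le_antisymm ((hℓ _ _).1 (h ▸ lt_add_one _)) ?_⟩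
    exact Nat.lt_of_not_le fun hle => lt_irrefl _ ((hℓ n _).2 hle)
  · rintro ⟨k, hk⟩
    have h1 : ¬ k < ℓ n := fun h => by have := (hℓ n k).1 h; omega
    have h2 : ¬ ℓ n < k := fun h => lt_irrefl _ ((hℓ n (ℓ n)).2 (by have := hc h; omega))
    have h3 : k < ℓ (n + 1) := (hℓ _ _).2 hk.le
    have h4 : ¬ k + 1 < ℓ (n + 1) := fun h => by
      have := hc (lt_add_one k); have := (hℓ _ _).1 h; omega
    omega

/-- With `ℓ(0) = 0` and `ℓ(n) = 1 + max{i : d_i(n) = 1}` for `n ≥ 1`, we have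
`ℓ(n) - ℓ(n-1) = 1` iff `n = 1`, or `n = L_{2i}` for some `i ≥ 1`, or
`n = L_{2i-1} + 1` for some `i ≥ 1`. Here `d n` denotes the canonical
φ-representation of `n`, and `ℓ` is characterized by the hypotheses. -/
theorem length_increase_iff
    (d : ℕ → ℤ →₀ ℕ) (hd : ∀ n : ℕ, IsCanonRep n (d n))
    (ℓ : ℕ → ℕ) (hℓ0 : ℓ 0 = 0)
    (hℓ : ∀ n : ℕ, 1 ≤ n → ∃ i : ℤ, d n i = 1 ∧ (∀ j : ℤ, d n j = 1 → j ≤ i) ∧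
        (ℓ n : ℤ) = i + 1) :
    ∀ n : ℕ, 1 ≤ n →
      (ℓ n = ℓ (n - 1) + 1 ↔
        (n = 1 ∨ (∃ i : ℕ, 1 ≤ i ∧ n = lucas (2 * i)) ∨
          (∃ i : ℕ, 1 ≤ i ∧ n = lucas (2 * i - 1) + 1))) := by
  have hℓ_lt : ∀ m k : ℕ, k < ℓ m ↔ ⌈φ ^ k⌉₊ ≤ m := by
    intro m k
    rw [Nat.ceil_le]
    rcases Nat.eq_zero_or_pos m with rfl | hm
    · simp [hℓ0, (pow_pos goldenRatio_pos k).not_ge]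
    obtain ⟨i, hi, hmax, hℓi⟩ := hℓ m hm
    have hx := zpow_le_iff_le_of_mem_Ico one_lt_goldenRatio
      ⟨(hd m).1.zpow_le hi, (hd m).lt_zpow_add_one hmax⟩ k
    rw [zpow_natCast] at hx
    rw [hx]
    omega
  intro n hn
  obtain ⟨n, rfl⟩ : ∃ m, n = m + 1 := ⟨n - 1, by omega⟩
  rw [Nat.add_sub_cancel,
    succ_eq_add_one_iff_exists_of_lt_iff_le strictMono_ceil_goldenRatio_pow hℓ_lt,
    exists_ceil_goldenRatio_pow_eq_iff]
end

section
/- The sequence (d_{−1}(n))_{n≥0} of digits of φ^{−1} in the canonical φ-representations of the natural numbers has limiting frequency of 1's equal to 1/(3φ+1); that is, lim_{N→∞} (1/N)·Σ_{0 ≤ n < N} d_{−1}(n) = 1/(3φ+1). -/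
open Real goldenRatio Finset Filter Topology

/-- The Minkowski embedding of `ℤ[φ]`: pairs `(x, x̄)` of an element of `ℤ[φ]` and its Galois
conjugate. -/
def goldenLattice : Subring (ℝ × ℝ) where
  carrier := {p | ∃ a b : ℤ, p = (a + b * φ, a + b * ψ)}
  mul_mem' := by
    rintro _ _ ⟨a, b, rfl⟩ ⟨c, d, rfl⟩
    refine ⟨a * c + b * d, a * d + b * c + b * d, ?_⟩
    ext <;> simp only [Prod.fst_mul, Prod.snd_mul] <;> push_cast
    · linear_combination (b * d : ℝ) * goldenRatio_sq
    · linear_combination (b * d : ℝ) * goldenConj_sq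
  one_mem' := ⟨1, 0, by ext <;> simp⟩
  add_mem' := by
    rintro _ _ ⟨a, b, rfl⟩ ⟨c, d, rfl⟩
    refine ⟨a + c, b + d, ?_⟩
    ext <;> simp only [Prod.fst_add, Prod.snd_add] <;> push_cast <;> ring
  zero_mem' := ⟨0, 0, by ext <;> simp⟩
  neg_mem' := by
    rintro _ ⟨a, b, rfl⟩
    exact ⟨-a, -b, by ext <;> simp only [Prod.fst_neg, Prod.snd_neg] <;> push_cast <;> ring⟩

namespace goldenLattice

theorem zpow_mem (i : ℤ) : (φ ^ i, ψ ^ i) ∈ goldenLattice := by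
  have hgold : (φ, ψ) ∈ goldenLattice := ⟨0, 1, by simp⟩
  have hinv : (φ⁻¹, ψ⁻¹) ∈ goldenLattice := by
    refine ⟨-1, 1, ?_⟩
    rw [inv_goldenRatio, inv_goldenConj, ← one_sub_goldenConj, ← one_sub_goldenRatio]
    push_cast
    ext <;> ring
  obtain ⟨k, rfl | rfl⟩ := i.eq_nat_or_neg
  · simpa only [zpow_natCast, Prod.pow_mk] using pow_mem hgold k
  · simpa only [zpow_neg, zpow_natCast, inv_pow, Prod.pow_mk] using pow_mem hinv k

theorem sum_zpow_mem (s : Finset ℤ) : (∑ i ∈ s, φ ^ i, ∑ i ∈ s, ψ ^ i) ∈ goldenLattice := by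
  rw [prod_mk_sum]
  exact sum_mem fun i _ => zpow_mem i

theorem snd_eq_of_fst_eq_intCast {p : ℝ × ℝ} (hp : p ∈ goldenLattice) {n : ℤ} (h : p.1 = n) :
    p.2 = n := by
  obtain ⟨a, b, rfl⟩ := hp
  obtain rfl : b = 0 := by
    by_contra hb
    exact ((goldenRatio_irrational.intCast_mul hb).intCast_add a).ne_int n h
  simpa using h

theorem exists_eq_of_abs_sub_lt {p : ℝ × ℝ} (hp : p ∈ goldenLattice) (h : |p.1 - p.2| < √5) :
    ∃ z : ℤ, p = ((z : ℝ), (z : ℝ)) := by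
  obtain ⟨a, b, rfl⟩ := hp
  have hsub : (a + b * φ) - (a + b * ψ) = b * √5 := by
    rw [← goldenRatio_sub_goldenConj]; ring
  rw [hsub, abs_mul, abs_of_pos (by positivity : (0 : ℝ) < √5),
    mul_lt_iff_lt_one_left (by positivity), ← Int.cast_abs] at h
  obtain rfl : b = 0 := Int.abs_lt_one_iff.mp (by exact_mod_cast h)
  exact ⟨a, by simp⟩

end goldenLattice

theorem sum_zpow_goldenConj_eq_of_sum_zpow_goldenRatio_eq {s : Finset ℤ} {n : ℤ}
    (h : ∑ i ∈ s, φ ^ i = n) : ∑ i ∈ s, ψ ^ i = n :=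
  goldenLattice.snd_eq_of_fst_eq_intCast (goldenLattice.sum_zpow_mem s) h

theorem sum_zpow_goldenRatio_lt {s : Finset ℤ} (hs : ∀ i ∈ s, i + 1 ∉ s) {J : ℤ}
    (hJ : ∀ i ∈ s, i ≤ J) : ∑ i ∈ s, φ ^ i < φ ^ (J + 1) := by
  induction s using Finset.induction_on_max generalizing J with
  | empty => simpa using zpow_pos goldenRatio_pos (J + 1)
  | insert a s hlt ih =>
    have hrest : ∑ i ∈ s, φ ^ i < φ ^ (a - 1) := by
      have := ih (J := a - 2) (fun i hi => hs i (mem_insert_of_mem hi) ∘ mem_insert_of_mem)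
        fun i hi => by
          have : i + 1 ≠ a := fun h => hs i (mem_insert_of_mem hi) (h ▸ mem_insert_self a s)
          have := hlt i hi
          omega
      rwa [show a - 2 + 1 = a - 1 by ring] at this
    have hfib : φ ^ a + φ ^ (a - 1) = φ ^ (a + 1) := by
      have h1 : φ ^ a = φ ^ (a - 1) * φ := by
        rw [← zpow_add_one₀ goldenRatio_ne_zero, sub_add_cancel]
      have h2 : φ ^ (a + 1) = φ ^ (a - 1) * φ ^ 2 := by
        rw [← zpow_natCast, ← zpow_add₀ goldenRatio_ne_zero]; ring_nf
      rw [h1, h2, goldenRatio_sq]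
      ring
    rw [sum_insert fun h => (hlt a h).false]
    calc φ ^ a + ∑ i ∈ s, φ ^ i < φ ^ (a + 1) := by linarith
      _ ≤ φ ^ (J + 1) :=
        zpow_le_zpow_right₀ one_lt_goldenRatio.le (by linarith [hJ a (mem_insert_self a s)])

theorem sum_zpow_neg_goldenRatio_lt {s : Finset ℤ} (hs : ∀ i ∈ s, i - 1 ∉ s) {J : ℤ}
    (hJ : ∀ i ∈ s, J ≤ i) : ∑ i ∈ s, φ ^ (-i) < φ ^ (1 - J) := by
  have hneg : ∑ i ∈ s, φ ^ (-i) = ∑ j ∈ s.map (Equiv.neg ℤ).toEmbedding, φ ^ j :=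
    (sum_map s (Equiv.neg ℤ).toEmbedding fun j => φ ^ j).symm
  rw [hneg, sub_eq_neg_add]
  refine sum_zpow_goldenRatio_lt (fun j hj => ?_) fun j hj => ?_ <;>
    simp only [mem_map_equiv, Equiv.neg_symm, Equiv.neg_apply] at hj ⊢
  · convert hs _ hj using 2; ring
  · linarith [hJ _ hj]

theorem goldenConj_zpow_of_even {i : ℤ} (hi : Even i) : ψ ^ i = φ ^ (-i) := by
  rw [← neg_neg ψ, ← inv_goldenRatio, hi.neg_zpow, inv_zpow']

theorem goldenConj_zpow_of_odd {i : ℤ} (hi : Odd i) : ψ ^ i = -φ ^ (-i) := by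
  rw [← neg_neg ψ, ← inv_goldenRatio, hi.neg_zpow, inv_zpow']

theorem sum_zpow_goldenConj_lt {s : Finset ℤ} {J : ℤ} (hJ : ∀ i ∈ s, Even i → J ≤ i) :
    ∑ i ∈ s, ψ ^ i < φ ^ (1 - J) := by
  rw [← sum_filter_add_sum_filter_not s Even]
  have heven : ∑ i ∈ s with Even i, ψ ^ i < φ ^ (1 - J) := by
    rw [sum_congr rfl fun i hi => goldenConj_zpow_of_even (mem_filter.mp hi).2]
    refine sum_zpow_neg_goldenRatio_lt (fun i hi h => ?_)
      fun i hi => hJ i (mem_filter.mp hi).1 (mem_filter.mp hi).2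
    exact Int.not_even_iff_odd.mpr ((mem_filter.mp hi).2.sub_odd odd_one) (mem_filter.mp h).2
  have hodd : ∑ i ∈ s with ¬Even i, ψ ^ i ≤ 0 := by
    refine sum_nonpos fun i hi => ?_
    rw [goldenConj_zpow_of_odd (Int.not_even_iff_odd.mp (mem_filter.mp hi).2), neg_nonpos]
    exact (zpow_pos goldenRatio_pos _).le
  linarith

theorem neg_zpow_goldenRatio_lt_sum_zpow_goldenConj {s : Finset ℤ} {J : ℤ}
    (hJ : ∀ i ∈ s, Odd i → J ≤ i) : -φ ^ (1 - J) < ∑ i ∈ s, ψ ^ i := by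
  rw [← sum_filter_add_sum_filter_not s Odd]
  have hodd : -φ ^ (1 - J) < ∑ i ∈ s with Odd i, ψ ^ i := by
    rw [sum_congr rfl fun i hi => goldenConj_zpow_of_odd (mem_filter.mp hi).2, sum_neg_distrib,
      neg_lt_neg_iff]
    refine sum_zpow_neg_goldenRatio_lt (fun i hi h => ?_)
      fun i hi => hJ i (mem_filter.mp hi).1 (mem_filter.mp hi).2
    exact Int.not_odd_iff_even.mpr ((mem_filter.mp hi).2.sub_odd odd_one) (mem_filter.mp h).2
  have heven : 0 ≤ ∑ i ∈ s with ¬Odd i, ψ ^ i := by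
    refine sum_nonneg fun i hi => ?_
    rw [goldenConj_zpow_of_even (Int.not_odd_iff_even.mp (mem_filter.mp hi).2)]
    exact (zpow_pos goldenRatio_pos _).le
  linarith

theorem inv_goldenRatio_eq_sub_one : φ⁻¹ = φ - 1 := by
  rw [inv_goldenRatio, ← one_sub_goldenConj, neg_sub]

theorem intCast_mul_goldenRatio_ne_intCast {m : ℤ} (hm : m ≠ 0) (k : ℤ) : m * φ ≠ k :=
  (goldenRatio_irrational.intCast_mul hm).ne_int k

noncomputable def negOneDigitSeq (j : ℕ) : ℕ := 3 * ⌊((j : ℝ) + 1) * φ⌋₊ + j + 2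

theorem strictMono_negOneDigitSeq : StrictMono negOneDigitSeq :=
  strictMono_nat_of_lt_succ fun j => by
    have : ⌊((j : ℝ) + 1) * φ⌋₊ ≤ ⌊(((j + 1 : ℕ) : ℝ) + 1) * φ⌋₊ :=
      Nat.floor_le_floor (by push_cast; nlinarith [goldenRatio_pos])
    unfold negOneDigitSeq
    omega

theorem abs_negOneDigitSeq_sub_le (j : ℕ) :
    |(negOneDigitSeq j : ℝ) - (3 * φ + 1) * j| ≤ 3 * φ + 2 := by
  have hfloor := Nat.floor_le (by positivity : 0 ≤ ((j : ℝ) + 1) * φ)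
  have hfloor' := Nat.lt_floor_add_one (((j : ℝ) + 1) * φ)
  rw [abs_le]
  unfold negOneDigitSeq
  push_cast
  constructor <;> nlinarith [one_lt_goldenRatio]

theorem mem_range_negOneDigitSeq_iff {n : ℕ} : n ∈ Set.range negOneDigitSeq ↔
    ∃ a b : ℤ, φ⁻¹ ≤ a + b * φ ∧ a + b * φ < 1 ∧ 2 * a + b = n + 1 := by
  rw [inv_goldenRatio_eq_sub_one]
  constructor
  · rintro ⟨j, rfl⟩
    obtain ⟨k, hk⟩ : ∃ k, ⌊((j : ℝ) + 1) * φ⌋₊ = k := ⟨_, rfl⟩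
    have hfloor : (k : ℝ) < ((j : ℝ) + 1) * φ := by
      have := intCast_mul_goldenRatio_ne_intCast (m := j + 1) (by omega) k
      push_cast at this
      exact hk ▸ (Nat.floor_le (by positivity)).lt_of_ne fun h => this (hk ▸ h.symm)
    have hfloor' : ((j : ℝ) + 1) * φ < k + 1 := hk ▸ Nat.lt_floor_add_one _
    -- `2 - φ = φ⁻²`
    have hx : (2 * k + j + 2 : ℝ) + -(j + 1 + k) * φ = 1 - ((j + 1) * φ - k) * (2 - φ) := by
      linear_combination (-(j + 1) : ℝ) * goldenRatio_sq
    have hsmall : 0 < ((j + 1) * φ - k) * (2 - φ) :=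
      mul_pos (by linarith) (by linarith [goldenRatio_lt_two])
    have hsmall' : ((j + 1) * φ - k) * (2 - φ) < 2 - φ := by nlinarith [goldenRatio_lt_two]
    refine ⟨2 * k + j + 2, -(j + 1 + k), ?_, ?_, ?_⟩
    all_goals push_cast
    · linarith
    · linarith
    · rw [negOneDigitSeq, hk]; push_cast; ring
  · rintro ⟨a, b, hlo, hhi, hsum⟩
    have key : ((1 - 2 * b - a : ℤ) : ℝ) * φ - (a + b - 1 : ℤ) = (1 - (a + b * φ)) * φ ^ 2 := by
      push_cast; linear_combination (b * φ + a + b - 1 : ℝ) * goldenRatio_sq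
    have hpos : 0 < (1 - (a + b * φ)) * φ ^ 2 := by have := goldenRatio_pos; positivity
    have hle : (1 - (a + b * φ)) * φ ^ 2 ≤ 1 := by
      calc (1 - (a + b * φ)) * φ ^ 2
          ≤ (2 - φ) * φ ^ 2 := mul_le_mul_of_nonneg_right (by linarith) (by positivity)
        _ = 1 := by linear_combination (1 - φ) * goldenRatio_sq
    have hk : 0 ≤ a + b - 1 := by
      by_contra h
      have hab : (a + b : ℝ) ≤ 0 := by exact_mod_cast (by omega : a + b ≤ 0)
      have ha : (1 : ℝ) ≤ a := by exact_mod_cast (by omega : 1 ≤ a)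
      nlinarith [one_lt_goldenRatio]
    have hm : 0 < 1 - 2 * b - a := by
      have : (0 : ℝ) ≤ (a + b - 1 : ℤ) := by exact_mod_cast hk
      have : (0 : ℝ) < (1 - 2 * b - a : ℤ) :=
        pos_of_mul_pos_left (by linarith) goldenRatio_pos.le
      exact_mod_cast this
    have hlt : (1 - (a + b * φ)) * φ ^ 2 < 1 := by
      refine hle.lt_of_ne fun h => intCast_mul_goldenRatio_ne_intCast hm.ne' (a + b - 1 + 1) ?_
      push_cast at key ⊢
      linarith
    obtain ⟨j, hj⟩ : ∃ j : ℕ, 1 - 2 * b - a = j + 1 := ⟨(-2 * b - a).toNat, by omega⟩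
    obtain ⟨k, hk⟩ : ∃ k : ℕ, a + b - 1 = k := ⟨(a + b - 1).toNat, by omega⟩
    rw [hj, hk] at key
    push_cast at key
    have hfloor : ⌊((j : ℝ) + 1) * φ⌋₊ = k :=
      (Nat.floor_eq_iff (by positivity)).mpr ⟨by linarith, by linarith⟩
    refine ⟨j, ?_⟩
    rw [negOneDigitSeq, hfloor]
    omega

theorem neg_one_mem_iff_mem_range_negOneDigitSeq {s : Finset ℤ} (hs : ∀ i ∈ s, i + 1 ∉ s)
    {n : ℕ} (hn : ∑ i ∈ s, φ ^ i = n) : -1 ∈ s ↔ n ∈ Set.range negOneDigitSeq := by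
  set Y := ∑ i ∈ s with i < 0, φ ^ i
  set Ybar := ∑ i ∈ s with i < 0, ψ ^ i
  set Xbar := ∑ i ∈ s with ¬i < 0, ψ ^ i
  have hYmem : (Y, Ybar) ∈ goldenLattice := goldenLattice.sum_zpow_mem _
  have hconj : Ybar + Xbar = n := by
    rw [sum_filter_add_sum_filter_not]
    exact_mod_cast sum_zpow_goldenConj_eq_of_sum_zpow_goldenRatio_eq (n := n)
      (by exact_mod_cast hn)
  have hY0 : 0 ≤ Y := sum_nonneg fun i _ => (zpow_pos goldenRatio_pos i).le
  have hY1 : ∀ {J : ℤ}, (∀ i ∈ s, i < 0 → i ≤ J) → Y < φ ^ (J + 1) := fun hJ =>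
    sum_zpow_goldenRatio_lt (fun i hi h => hs i (mem_filter.mp hi).1 (mem_filter.mp h).1)
      fun i hi => hJ i (mem_filter.mp hi).1 (mem_filter.mp hi).2
  have hX : -1 < Xbar := by
    simpa only [sub_self, zpow_zero] using
      neg_zpow_goldenRatio_lt_sum_zpow_goldenConj (J := 1) (s := s.filter (¬· < 0))
        fun i hi hodd => by have := (mem_filter.mp hi).2; obtain ⟨k, rfl⟩ := hodd; omega
  rw [mem_range_negOneDigitSeq_iff]
  constructor
  · intro h
    obtain ⟨a, b, hab⟩ := hYmem
    simp only [Prod.mk.injEq] at hab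
    have hYlo : φ⁻¹ ≤ Y := by
      simpa using single_le_sum (f := (φ ^ ·)) (fun i _ => (zpow_pos goldenRatio_pos i).le)
        (mem_filter.mpr ⟨h, by norm_num⟩ : -1 ∈ s.filter (· < 0))
    have hYhi : Y < 1 := by simpa only [neg_add_cancel, zpow_zero] using hY1 (J := -1) (by omega)
    have hXhi : Xbar < φ⁻¹ := by
      have h0 : (0 : ℤ) ∉ s := hs (-1) h
      simpa only [show (1 : ℤ) - 2 = -1 by norm_num, zpow_neg_one] using
        sum_zpow_goldenConj_lt (J := 2) (s := s.filter (¬· < 0)) fun i hi heven => by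
          obtain ⟨his, hi0⟩ := mem_filter.mp hi
          obtain ⟨k, rfl⟩ := heven
          have : k + k ≠ 0 := fun h => h0 (h ▸ his)
          omega
    refine ⟨a, b, hab.1 ▸ hYlo, hab.1 ▸ hYhi, ?_⟩
    -- `Y + Ybar = 2a + b` is an integer in `(n, n + 2)`.
    have hsum : Y + Ybar = 2 * a + b := by rw [hab.1, hab.2, ← one_sub_goldenConj]; ring
    have h1 : ((n : ℤ) : ℝ) < ((2 * a + b : ℤ) : ℝ) := by push_cast; linarith
    have h2 : ((2 * a + b : ℤ) : ℝ) < ((n + 2 : ℤ) : ℝ) := by push_cast; linarith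
    have := Int.cast_lt.mp h1
    have := Int.cast_lt.mp h2
    omega
  · rintro ⟨a, b, hlo, hhi, hsum⟩
    by_contra h
    have hYhi : Y < φ⁻¹ := by
      simpa only [show (-2 : ℤ) + 1 = -1 by norm_num, zpow_neg_one] using
        hY1 (J := -2) fun i his hi => by
          have : i ≠ -1 := fun h' => h (h' ▸ his)
          omega
    have hXhi : Xbar < φ := by
      simpa only [sub_zero, zpow_one] using sum_zpow_goldenConj_lt (J := 0)
        (s := s.filter (¬· < 0)) fun i hi _ => by have := (mem_filter.mp hi).2; omega
    -- `(a + bφ, a + bψ) - (Y, Ybar)` would be a lattice point in `(0, 1) × (-1, 2)`.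
    have hmem : ((a + b * φ : ℝ), (a + b * ψ : ℝ)) - (Y, Ybar) ∈ goldenLattice :=
      sub_mem ⟨a, b, rfl⟩ hYmem
    have hsnd : (a + b * ψ : ℝ) = n + 1 - (a + b * φ) := by
      rw [← one_sub_goldenConj]
      have : ((2 * a + b : ℤ) : ℝ) = ((n + 1 : ℤ) : ℝ) := congrArg _ hsum
      push_cast at this
      linarith
    have hsqrt : (2 : ℝ) < √5 := by rw [Real.lt_sqrt] <;> norm_num
    obtain ⟨z, hz⟩ := goldenLattice.exists_eq_of_abs_sub_lt hmem (by
      simp only [Prod.fst_sub, Prod.snd_sub, hsnd, abs_lt]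
      constructor <;> linarith [inv_goldenRatio_eq_sub_one])
    simp only [Prod.mk_sub_mk, Prod.mk.injEq] at hz
    have h0 : ((0 : ℤ) : ℝ) < z := by push_cast; linarith
    have h1 : (z : ℝ) < ((1 : ℤ) : ℝ) := by push_cast; linarith
    have := Int.cast_lt.mp h0
    have := Int.cast_lt.mp h1
    omega

theorem IsCanonRep.neg_one_digit_eq_one_iff {n : ℕ} {a : ℤ →₀ ℕ} (h : IsCanonRep n a) :
    a (-1) = 1 ↔ n ∈ Set.range negOneDigitSeq := by
  obtain ⟨⟨hle, hsum⟩, hadj⟩ := h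
  have hone : ∀ i ∈ a.support, a i = 1 := fun i hi => by
    have := Finsupp.mem_support_iff.mp hi; have := hle i; omega
  rw [← neg_one_mem_iff_mem_range_negOneDigitSeq (s := a.support)]
  · exact ⟨fun h => Finsupp.mem_support_iff.mpr (by omega), hone _⟩
  · intro i hi hi'
    simpa [hone i hi, hone _ hi'] using hadj i
  · rw [hsum]
    exact sum_congr rfl fun i hi => by rw [hone i hi, Nat.cast_one, one_mul]; rfl

theorem tendsto_card_filter_mem_range_div {f : ℕ → ℕ} [DecidablePred (· ∈ Set.range f)]
    (hf : StrictMono f) {c C : ℝ} (hc : 0 < c) (hfC : ∀ j, |(f j : ℝ) - c * j| ≤ C) :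
    Tendsto (fun N : ℕ => (#{n ∈ range N | n ∈ Set.range f} : ℝ) / N) atTop (𝓝 c⁻¹) := by
  have hcount : ∀ N, #{n ∈ range N | n ∈ Set.range f} = #{j ∈ range N | f j < N} := fun N => by
    rw [← card_image_of_injective {j ∈ range N | f j < N} hf.injective]
    congr 1
    ext n
    simp only [mem_filter, mem_range, mem_image, Set.mem_range]
    constructor
    · rintro ⟨hn, j, rfl⟩; exact ⟨j, ⟨(hf.id_le j).trans_lt hn, hn⟩, rfl⟩
    · rintro ⟨j, ⟨-, hj⟩, rfl⟩; exact ⟨hj, j, rfl⟩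
  have hC : 0 ≤ C := (abs_nonneg _).trans (hfC 0)
  have hlower : ∀ N : ℕ, (N - C) / c ≤ #{j ∈ range N | f j < N} := fun N => by
    refine (Nat.le_ceil _).trans (Nat.cast_le.mpr ?_)
    refine (card_range _).symm.le.trans (card_le_card fun j hj => ?_)
    have hj : (j : ℝ) < (N - C) / c := Nat.lt_ceil.mp (mem_range.mp hj)
    rw [lt_div_iff₀ hc] at hj
    have hfj : (f j : ℝ) < N := by linarith [(abs_le.mp (hfC j)).2]
    exact mem_filter.mpr
      ⟨mem_range.mpr ((hf.id_le j).trans_lt (by exact_mod_cast hfj)), by exact_mod_cast hfj⟩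
  have hupper : ∀ N : ℕ, (#{j ∈ range N | f j < N} : ℝ) < (N + C) / c + 1 := fun N => by
    refine lt_of_le_of_lt (Nat.cast_le.mpr ?_) (Nat.ceil_lt_add_one (by positivity))
    refine (card_le_card fun j hj => ?_).trans (card_range _).le
    have hfj : (f j : ℝ) < N := by exact_mod_cast (mem_filter.mp hj).2
    refine mem_range.mpr (Nat.lt_ceil.mpr ?_)
    rw [lt_div_iff₀ hc]
    linarith [(abs_le.mp (hfC j)).1]
  rw [tendsto_iff_norm_sub_tendsto_zero]
  refine squeeze_zero' (Eventually.of_forall fun _ => norm_nonneg _) ?_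
    (tendsto_const_div_atTop_nhds_zero_nat (C / c + 1))
  filter_upwards [eventually_gt_atTop 0] with N hN
  have hN' : (0 : ℝ) < N := by exact_mod_cast hN
  have h1 := hlower N
  have h2 := hupper N
  rw [hcount, Real.norm_eq_abs]
  set K : ℝ := ↑(#{j ∈ range N | f j < N})
  rw [show K / N - c⁻¹ = (K - N / c) / N by field_simp, abs_div, abs_of_pos hN']
  gcongr
  rw [sub_div] at h1
  rw [add_div] at h2
  rw [abs_le]
  constructor <;> linarith [div_nonneg hC hc.le]

/-- The limiting frequency of 1's in the sequence `(d_{-1}(n))_{n ≥ 0}` is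
`1/(3φ+1)`. Here `d n` denotes the canonical φ-representation of `n`. -/
theorem dminus1_limiting_frequency
    (d : ℕ → ℤ →₀ ℕ) (hd : ∀ n : ℕ, IsCanonRep n (d n)) :
    Filter.Tendsto
      (fun N : ℕ => (1 / (N : ℝ)) * ∑ n ∈ Finset.range N, (d n (-1) : ℝ))
      Filter.atTop (nhds (1 / (3 * phi + 1))) := by
  classical
  have hdigit : ∀ n, (d n (-1) : ℝ) = if n ∈ Set.range negOneDigitSeq then 1 else 0 := by
    intro n
    split_ifs with h
    · exact_mod_cast (hd n).neg_one_digit_eq_one_iff.mpr h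
    · have := (hd n).1.1 (-1)
      have := mt (hd n).neg_one_digit_eq_one_iff.mp h
      exact_mod_cast (by omega : d n (-1) = 0)
  simp_rw [hdigit, sum_boole, one_div_mul_eq_div, one_div]
  exact tendsto_card_filter_mem_range_div strictMono_negOneDigitSeq (c := 3 * φ + 1)
    (by positivity) abs_negOneDigitSeq_sub_le
end
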